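/- arXiv:1503.02736 — 2 statements merged into one kernel-verified Lean document; each statement's English description precedes it below -/
import Mathlib

section
/- Let α, k, h₀, D∞ be positive reals and ξ > 0. Define T(x,t) = -(h₀D∞√(πα)/k) · erf(ξ)/(1 + (h₀√(πα)/k)·erf(ξ)) · [1 - erf(x/(2√(αt)))/erf(ξ)] and s(t) = 2ξ√(αt). Then: (i) T satisfies the heat equation T_t(x,t) = α T_xx(x,t) for all 0 < x < s(t), t > 0; (ii) T(s(t), t) = 0 for all t > 0; (iii) k T_x(0,t) = (h₀/√t)(T(0,t) + D∞) for all t > 0. -/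
/-! `erf (x / (2√(αt)))` is the similarity solution of the heat equation: with `η = x / (2√(αt))`,
both `∂ₜ` and `α ∂ₓ²` of it equal `-η/(2t) · erf' η`, because `erf'' η = -2η erf' η`. The
temperature is an affine function of it, normalised to vanish at `η = ξ`; since `erf 0 = 0` and
`erf' 0 = 2/√π`, the convective condition at `x = 0` is then an algebraic identity. -/

open Real Filter Set Topology

/-- The error function `erf x = (2/√π) ∫₀ˣ exp(-t²) dt`. -/
noncomputable def erf (x : ℝ) : ℝ := (2 / Real.sqrt π) * ∫ t in (0:ℝ)..x, Real.exp (-t ^ 2)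

noncomputable def erf' (x : ℝ) : ℝ := 2 / √π * exp (-x ^ 2)

lemma erf_zero : erf 0 = 0 := by simp [erf]

lemma erf'_zero : erf' 0 = 2 / √π := by simp [erf']

lemma erf_pos {x : ℝ} (hx : 0 < x) : 0 < erf x := by
  have hcont : Continuous fun t : ℝ => exp (-t ^ 2) := by fun_prop
  exact mul_pos (by positivity) (intervalIntegral.intervalIntegral_pos_of_pos_on
    (hcont.intervalIntegrable 0 x) (fun t _ => exp_pos _) hx)

lemma hasDerivAt_erf (x : ℝ) : HasDerivAt erf (erf' x) x := by
  have hcont : Continuous fun t : ℝ => exp (-t ^ 2) := by fun_prop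
  exact (intervalIntegral.integral_hasDerivAt_right (hcont.intervalIntegrable 0 x)
    (hcont.stronglyMeasurableAtFilter _ _) hcont.continuousAt).const_mul (2 / √π)

lemma hasDerivAt_erf' (x : ℝ) : HasDerivAt erf' (-2 * x * erf' x) x := by
  have h : HasDerivAt (fun y => 2 / √π * exp (-y ^ 2)) _ x :=
    ((hasDerivAt_pow 2 x).neg.exp).const_mul (2 / √π)
  refine h.congr_deriv ?_
  simp only [erf', Pi.neg_apply]
  ring

lemma hasDerivAt_affine_erf_div (a b L y : ℝ) :
    HasDerivAt (fun y => a + b * erf (y / L)) (b * (erf' (y / L) / L)) y := by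
  have h := (hasDerivAt_erf (y / L)).comp y ((hasDerivAt_id y).div_const L)
  exact ((h.const_mul b).const_add a).congr_deriv (by field_simp)

lemma hasDerivAt_erf'_div (b L y : ℝ) :
    HasDerivAt (fun y => b * (erf' (y / L) / L)) (b * (-2 * (y / L) * erf' (y / L) / L / L)) y := by
  have h := (hasDerivAt_erf' (y / L)).comp y ((hasDerivAt_id y).div_const L)
  exact ((h.div_const L).const_mul b).congr_deriv (by field_simp)

lemma hasDerivAt_div_two_sqrt_mul {α t : ℝ} (hα : 0 < α) (ht : 0 < t) (x : ℝ) :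
    HasDerivAt (fun τ => x / (2 * √(α * τ))) (-(x / (2 * √(α * t))) / (2 * t)) t := by
  have hαt : 0 < α * t := mul_pos hα ht
  have hsqrt := (((hasDerivAt_id t).const_mul α).sqrt (by simpa using hαt.ne')).const_mul 2
  have h : HasDerivAt (fun τ => x / (2 * √(α * τ))) _ t :=
    (hasDerivAt_const t x).div hsqrt (by simp; positivity)
  refine h.congr_deriv ?_
  have := sqrt_pos.2 hαt
  simp only [id, mul_one]
  field_simp
  rw [sq_sqrt hαt.le]
  ring

theorem heat_eq_affine_erf_similarity {α t : ℝ} (hα : 0 < α) (ht : 0 < t) (a b x : ℝ) :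
    deriv (fun τ => a + b * erf (x / (2 * √(α * τ)))) t =
      α * deriv (deriv fun y => a + b * erf (y / (2 * √(α * t)))) x := by
  have htime : HasDerivAt (fun τ => a + b * erf (x / (2 * √(α * τ)))) _ t :=
    (((hasDerivAt_erf _).comp t (hasDerivAt_div_two_sqrt_mul hα ht x)).const_mul b).const_add a
  set L := 2 * √(α * t) with hL
  have hL2 : L * L = 4 * (α * t) := by
    rw [hL, mul_mul_mul_comm, mul_self_sqrt (mul_pos hα ht).le]; ring
  have hspace : (deriv fun y => a + b * erf (y / L)) = fun y => b * (erf' (y / L) / L) :=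
    funext fun y => (hasDerivAt_affine_erf_div a b L y).deriv
  rw [htime.deriv, hspace, (hasDerivAt_erf'_div b L x).deriv, div_div, hL2]
  field_simp
  ring

theorem stmt_3_general (α k h₀ Dinf ξ : ℝ) (hα : 0 < α) (hk : 0 < k) (hh : 0 < h₀)
    (hξ : 0 < ξ)
    (T : ℝ → ℝ → ℝ) (s : ℝ → ℝ)
    (hT : ∀ x t, T x t =
      -(h₀ * Dinf * Real.sqrt (π * α) / k) *
        (erf ξ / (1 + (h₀ * Real.sqrt (π * α) / k) * erf ξ)) *
        (1 - erf (x / (2 * Real.sqrt (α * t))) / erf ξ))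
    (hs : ∀ t, s t = 2 * ξ * Real.sqrt (α * t)) :
    (∀ t > (0:ℝ), ∀ x, 0 < x → x < s t →
      deriv (fun τ => T x τ) t = α * deriv (deriv (fun y => T y t)) x) ∧
    (∀ t > (0:ℝ), T (s t) t = 0) ∧
    (∀ t > (0:ℝ), k * deriv (fun y => T y t) 0 = (h₀ / Real.sqrt t) * (T 0 t + Dinf)) := by
  have hE : 0 < erf ξ := erf_pos hξ
  set C := -(h₀ * Dinf * √(π * α) / k) * (erf ξ / (1 + (h₀ * √(π * α) / k) * erf ξ)) with hC
  obtain rfl : T = fun x t => C + -C / erf ξ * erf (x / (2 * √(α * t))) := by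
    ext x t; rw [hT]; field_simp; ring
  refine ⟨fun t ht x _ _ => heat_eq_affine_erf_similarity hα ht _ _ x, fun t ht => ?_, fun t ht => ?_⟩
  · have hsξ : s t / (2 * √(α * t)) = ξ := by
      have := sqrt_pos.2 (mul_pos hα ht)
      rw [hs]; field_simp
    simp only [hsξ]
    field_simp
    ring
  · beta_reduce
    rw [(hasDerivAt_affine_erf_div _ _ _ 0).deriv, zero_div, erf_zero, erf'_zero,
      sqrt_mul hα.le, hC, sqrt_mul pi_pos.le]
    have : 0 < 1 + h₀ * (√π * √α) / k * erf ξ := by positivity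
    have := sqrt_pos.2 ht
    field_simp
    ring

/-- The explicit temperature of the convective mushy-zone problem satisfies the heat
equation, vanishes on the solid–mushy interface `s(t) = 2ξ√(αt)`, and satisfies the
convective boundary condition `k T_x(0,t) = (h₀/√t)(T(0,t) + D∞)` at the fixed face. -/
theorem stmt_3 (α k h₀ Dinf ξ : ℝ) (hα : 0 < α) (hk : 0 < k) (hh : 0 < h₀)
    (hD : 0 < Dinf) (hξ : 0 < ξ)
    (T : ℝ → ℝ → ℝ) (s : ℝ → ℝ)
    (hT : ∀ x t, T x t =
      -(h₀ * Dinf * Real.sqrt (π * α) / k) *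
        (erf ξ / (1 + (h₀ * Real.sqrt (π * α) / k) * erf ξ)) *
        (1 - erf (x / (2 * Real.sqrt (α * t))) / erf ξ))
    (hs : ∀ t, s t = 2 * ξ * Real.sqrt (α * t)) :
    (∀ t > (0:ℝ), ∀ x, 0 < x → x < s t →
      deriv (fun τ => T x τ) t = α * deriv (deriv (fun y => T y t)) x) ∧
    (∀ t > (0:ℝ), T (s t) t = 0) ∧
    (∀ t > (0:ℝ), k * deriv (fun y => T y t) 0 = (h₀ / Real.sqrt t) * (T 0 t + Dinf)) :=
  stmt_3_general α k h₀ Dinf ξ hα hk hh hξ T s hT hs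
end

section
/- Let ρ, c, k, ℓ, γ, D∞ be positive reals, α = k/(ρc), 0 < ε < 1, h₀* = (1/D∞)√(γ(1-ε)ρℓk/2). For h₀ > h₀* let ξ(h₀) > 0 be the unique solution of (D∞c/(ℓ√π))·exp(-x²)/(k/(h₀√(πα)) + erf(x)) = x + (γ(1-ε)√π/(2D∞))·(k/(h₀√(πα)) + erf(x))·exp(x²), and let ξ∞ > 0 be the unique solution of the corresponding equation with h₀ = ∞ (i.e. with k/(h₀√(πα)) replaced by 0). Then ξ(h₀) < ξ∞ for all h₀ > h₀*, and ξ∞ - ξ(h₀) = O(1/h₀) as h₀ → +∞, i.e. there exist constants C > 0 and H > 0 such that 0 < ξ∞ - ξ(h₀) ≤ C/h₀ for all h₀ ≥ H. -/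
open Real Filter Set Topology

lemma intervalIntegrable_exp_neg_sq (a b : ℝ) :
    IntervalIntegrable (fun t : ℝ => Real.exp (-t ^ 2)) MeasureTheory.volume a b :=
  (by fun_prop : Continuous fun t : ℝ => Real.exp (-t ^ 2)).intervalIntegrable a b

lemma erf_monotone : Monotone erf := by
  intro a b hab
  have hsplit := intervalIntegral.integral_add_adjacent_intervals
    (intervalIntegrable_exp_neg_sq 0 a) (intervalIntegrable_exp_neg_sq a b)
  have hnonneg : 0 ≤ ∫ t in a..b, Real.exp (-t ^ 2) :=
    intervalIntegral.integral_nonneg hab fun t _ => (Real.exp_pos _).le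
  unfold erf
  gcongr
  linarith

lemma erf_nonneg {x : ℝ} (hx : 0 ≤ x) : 0 ≤ erf x := by
  rcases hx.eq_or_lt with rfl | hx
  · simp [erf]
  · exact (erf_pos hx).le

lemma erf_mul_exp_sq_le {x y : ℝ} (hx : 0 ≤ x) (hxy : x ≤ y) :
    erf x * Real.exp (x ^ 2) ≤ erf y * Real.exp (y ^ 2) := by
  have hexp : Real.exp (x ^ 2) ≤ Real.exp (y ^ 2) := by gcongr
  exact mul_le_mul (erf_monotone hxy) hexp (Real.exp_pos _).le (erf_nonneg (hx.trans hxy))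

noncomputable def stefanLhs (A β x : ℝ) : ℝ := A * Real.exp (-x ^ 2) / (β + erf x)

noncomputable def stefanRhs (B β x : ℝ) : ℝ := x + B * (β + erf x) * Real.exp (x ^ 2)

section Comparison

variable {A B β x y : ℝ}

lemma stefanLhs_antitone_left (hA : 0 ≤ A) (hβ : 0 ≤ β) (hx : 0 < x) (hxy : x ≤ y) :
    stefanLhs A β y ≤ stefanLhs A β x := by
  have hexp : Real.exp (-y ^ 2) ≤ Real.exp (-x ^ 2) := by gcongr
  have herf : β + erf x ≤ β + erf y := by gcongr; exact erf_monotone hxy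
  unfold stefanLhs
  gcongr
  exact add_pos_of_nonneg_of_pos hβ (erf_pos hx)

lemma stefanLhs_le_stefanLhs_zero (hA : 0 ≤ A) (hβ : 0 ≤ β) (hx : 0 < x) :
    stefanLhs A β x ≤ stefanLhs A 0 x := by
  have := erf_pos hx
  unfold stefanLhs
  gcongr

lemma stefanLhs_zero_sub_le (hA : 0 ≤ A) (hβ : 0 ≤ β) (hx : 0 < x) :
    stefanLhs A 0 x - stefanLhs A β x ≤ β * (A * Real.exp (-x ^ 2) / erf x ^ 2) := by
  have hv := erf_pos hx
  have hq : 0 ≤ A * Real.exp (-x ^ 2) := by positivity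
  have hdiff : stefanLhs A 0 x - stefanLhs A β x
      = β * (A * Real.exp (-x ^ 2)) / (erf x * (β + erf x)) := by
    unfold stefanLhs
    field_simp
    ring
  calc stefanLhs A 0 x - stefanLhs A β x
      = β * (A * Real.exp (-x ^ 2)) / (erf x * (β + erf x)) := hdiff
    _ ≤ β * (A * Real.exp (-x ^ 2)) / (erf x * erf x) := by gcongr; linarith
    _ = β * (A * Real.exp (-x ^ 2) / erf x ^ 2) := by ring

lemma stefanRhs_eq_zero_add (B β x : ℝ) :
    stefanRhs B β x = stefanRhs B 0 x + B * β * Real.exp (x ^ 2) := by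
  unfold stefanRhs
  ring

lemma stefanRhs_zero_mono (hB : 0 ≤ B) (hx : 0 ≤ x) (hxy : x ≤ y) :
    stefanRhs B 0 x ≤ stefanRhs B 0 y := by
  have := erf_mul_exp_sq_le hx hxy
  unfold stefanRhs
  simp only [zero_add, mul_assoc]
  gcongr

lemma sub_le_stefanRhs_zero_sub (hB : 0 ≤ B) (hx : 0 ≤ x) (hxy : x ≤ y) :
    y - x ≤ stefanRhs B 0 y - stefanRhs B 0 x := by
  have := erf_mul_exp_sq_le hx hxy
  unfold stefanRhs
  simp only [zero_add, mul_assoc]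
  nlinarith

theorem root_lt_and_sub_le (hA : 0 ≤ A) (hB : 0 < B) (hβ : 0 < β) (hx : 0 < x) (hy : 0 < y)
    (hxeq : stefanLhs A β x = stefanRhs B β x) (hyeq : stefanLhs A 0 y = stefanRhs B 0 y) :
    x < y ∧ y - x ≤ β * (A * Real.exp (-y ^ 2) / erf y ^ 2 + B * Real.exp (y ^ 2)) := by
  have hshift := stefanRhs_eq_zero_add B β x
  have hlt : x < y := by
    by_contra! hyx
    have hgap : 0 < B * β * Real.exp (x ^ 2) := by positivity
    have := stefanRhs_zero_mono hB.le hy.le hyx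
    have := stefanLhs_antitone_left hA hβ.le hy hyx
    have := stefanLhs_le_stefanLhs_zero hA hβ.le hy
    linarith
  refine ⟨hlt, ?_⟩
  have hexp : Real.exp (x ^ 2) ≤ Real.exp (y ^ 2) := by gcongr
  have hBβ : B * β * Real.exp (x ^ 2) ≤ β * (B * Real.exp (y ^ 2)) := by
    rw [mul_left_comm, mul_assoc]
    gcongr
  calc y - x ≤ stefanRhs B 0 y - stefanRhs B 0 x := sub_le_stefanRhs_zero_sub hB.le hx.le hlt.le
    _ = stefanLhs A 0 y - stefanLhs A β x + B * β * Real.exp (x ^ 2) := by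
      rw [hyeq, hxeq, hshift]; ring
    _ ≤ (stefanLhs A 0 y - stefanLhs A β y) + β * (B * Real.exp (y ^ 2)) := by
      linarith [stefanLhs_antitone_left hA hβ.le hx hlt.le]
    _ ≤ β * (A * Real.exp (-y ^ 2) / erf y ^ 2) + β * (B * Real.exp (y ^ 2)) := by
      gcongr; exact stefanLhs_zero_sub_le hA hβ.le hy
    _ = β * (A * Real.exp (-y ^ 2) / erf y ^ 2 + B * Real.exp (y ^ 2)) := by ring

end Comparison

theorem stmt_11_general (ρ c k ℓ γ Dinf α ε h₀star : ℝ)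
    (hρ : 0 < ρ) (hc : 0 < c) (hk : 0 < k) (hℓ : 0 < ℓ) (hγ : 0 < γ) (hD : 0 < Dinf)
    (hα : α = k / (ρ * c)) (hε1 : ε < 1)
    (hstar : h₀star = (1 / Dinf) * Real.sqrt (γ * (1 - ε) * ρ * ℓ * k / 2))
    (ξ : ℝ → ℝ) (ξinf : ℝ)
    (hξpos : ∀ h₀ > h₀star, 0 < ξ h₀)
    (hξeq : ∀ h₀ > h₀star,
      (Dinf * c / (ℓ * Real.sqrt π)) * Real.exp (-(ξ h₀) ^ 2) /
          (k / (h₀ * Real.sqrt (π * α)) + erf (ξ h₀)) =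
        ξ h₀ + (γ * (1 - ε) * Real.sqrt π / (2 * Dinf)) *
          (k / (h₀ * Real.sqrt (π * α)) + erf (ξ h₀)) * Real.exp ((ξ h₀) ^ 2))
    -- `ξ∞` is the unique positive solution of the equation with `k/(h₀√(πα))` replaced by `0`
    (hξinfpos : 0 < ξinf)
    (hξinfeq : (Dinf * c / (ℓ * Real.sqrt π)) * Real.exp (-ξinf ^ 2) / erf ξinf =
      ξinf + (γ * (1 - ε) * Real.sqrt π / (2 * Dinf)) * erf ξinf * Real.exp (ξinf ^ 2)) :
    (∀ h₀ > h₀star, ξ h₀ < ξinf) ∧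
    ∃ C > (0:ℝ), ∃ H > (0:ℝ), ∀ h₀ ≥ H, 0 < ξinf - ξ h₀ ∧ ξinf - ξ h₀ ≤ C / h₀ := by
  set A := Dinf * c / (ℓ * Real.sqrt π)
  set B := γ * (1 - ε) * Real.sqrt π / (2 * Dinf)
  set K := k / Real.sqrt (π * α)
  have hε : 0 < 1 - ε := by linarith
  have hA : 0 < A := by positivity
  have hB : 0 < B := by positivity
  have hαpos : 0 < α := by rw [hα]; positivity
  have hK : 0 < K := div_pos hk (Real.sqrt_pos.mpr (by positivity))
  have hstar0 : 0 ≤ h₀star := by rw [hstar]; positivity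
  set C := K * (A * Real.exp (-ξinf ^ 2) / erf ξinf ^ 2 + B * Real.exp (ξinf ^ 2))
  have hC : 0 < C := by have := erf_pos hξinfpos; positivity
  have hinf : stefanLhs A 0 ξinf = stefanRhs B 0 ξinf := by
    simpa only [stefanLhs, stefanRhs, zero_add] using hξinfeq
  have key : ∀ h₀ > h₀star, ξ h₀ < ξinf ∧ ξinf - ξ h₀ ≤ C / h₀ := by
    intro h₀ hh₀
    have hh₀pos : 0 < h₀ := hstar0.trans_lt hh₀
    have hβ : k / (h₀ * Real.sqrt (π * α)) = K / h₀ := by rw [div_div, mul_comm h₀]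
    have hroot := root_lt_and_sub_le hA.le hB (by positivity : 0 < K / h₀) (hξpos h₀ hh₀)
      hξinfpos (by simpa only [stefanLhs, stefanRhs, hβ] using hξeq h₀ hh₀) hinf
    refine ⟨hroot.1, hroot.2.trans_eq ?_⟩
    ring
  refine ⟨fun h₀ hh₀ => (key h₀ hh₀).1, C, hC, h₀star + 1, by linarith, fun h₀ hh₀ => ?_⟩
  obtain ⟨hlt, hle⟩ := key h₀ (by linarith)
  exact ⟨sub_pos.mpr hlt, hle⟩

/-- `ξ(h₀) < ξ∞` for all admissible `h₀`, and the convergence `ξ(h₀) → ξ∞` as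
`h₀ → +∞` is of order `O(1/h₀)`. -/
theorem stmt_11 (ρ c k ℓ γ Dinf α ε h₀star : ℝ)
    (hρ : 0 < ρ) (hc : 0 < c) (hk : 0 < k) (hℓ : 0 < ℓ) (hγ : 0 < γ) (hD : 0 < Dinf)
    (hα : α = k / (ρ * c)) (hε0 : 0 < ε) (hε1 : ε < 1)
    (hstar : h₀star = (1 / Dinf) * Real.sqrt (γ * (1 - ε) * ρ * ℓ * k / 2))
    (ξ : ℝ → ℝ) (ξinf : ℝ)
    (hξpos : ∀ h₀ > h₀star, 0 < ξ h₀)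
    (hξeq : ∀ h₀ > h₀star,
      (Dinf * c / (ℓ * Real.sqrt π)) * Real.exp (-(ξ h₀) ^ 2) /
          (k / (h₀ * Real.sqrt (π * α)) + erf (ξ h₀)) =
        ξ h₀ + (γ * (1 - ε) * Real.sqrt π / (2 * Dinf)) *
          (k / (h₀ * Real.sqrt (π * α)) + erf (ξ h₀)) * Real.exp ((ξ h₀) ^ 2))
    (hξuniq : ∀ h₀ > h₀star, ∀ y > (0:ℝ),
      (Dinf * c / (ℓ * Real.sqrt π)) * Real.exp (-y ^ 2) /
          (k / (h₀ * Real.sqrt (π * α)) + erf y) =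
        y + (γ * (1 - ε) * Real.sqrt π / (2 * Dinf)) *
          (k / (h₀ * Real.sqrt (π * α)) + erf y) * Real.exp (y ^ 2) → y = ξ h₀)
    -- `ξ∞` is the unique positive solution of the equation with `k/(h₀√(πα))` replaced by `0`
    (hξinfpos : 0 < ξinf)
    (hξinfeq : (Dinf * c / (ℓ * Real.sqrt π)) * Real.exp (-ξinf ^ 2) / erf ξinf =
      ξinf + (γ * (1 - ε) * Real.sqrt π / (2 * Dinf)) * erf ξinf * Real.exp (ξinf ^ 2))
    (hξinfuniq : ∀ y > (0:ℝ),
      (Dinf * c / (ℓ * Real.sqrt π)) * Real.exp (-y ^ 2) / erf y =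
        y + (γ * (1 - ε) * Real.sqrt π / (2 * Dinf)) * erf y * Real.exp (y ^ 2) → y = ξinf) :
    (∀ h₀ > h₀star, ξ h₀ < ξinf) ∧
    ∃ C > (0:ℝ), ∃ H > (0:ℝ), ∀ h₀ ≥ H, 0 < ξinf - ξ h₀ ∧ ξinf - ξ h₀ ≤ C / h₀ :=
  stmt_11_general ρ c k ℓ γ Dinf α ε h₀star hρ hc hk hℓ hγ hD hα hε1 hstar ξ ξinf hξpos hξeq
    hξinfpos hξinfeq
end
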